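/- Let 𝔅 be an atomless complete Boolean algebra carrying a strictly positive continuous submeasure μ. Then there exists an injective Boolean-algebra homomorphism F from the algebra of clopen subsets of ω × 2^ω (ω taken discrete, 2^ω the Cantor space) into 𝔅 such that for every n ∈ ω and every sequence f₁, f₂, ... ∈ 2^ω there exist N₁, N₂, ... ∈ ω with ⨆_{i∈ω} F({n} × [f_i ↾ N_i]) < F({n} × 2^ω), where [s] denotes the basic clopen set of all elements of 2^ω extending the finite string s. -/

import Mathlib

/-!
Split `⊤` into countably many nonzero pieces `c n` and, below each `c n`, grow a binary tree
of nonzero elements in which every node is the disjoint union of its two children and the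
submeasure tends to `0` along every branch. Each node `x` carries a target `ε`: if `μ x < ε`,
`x` is split into two halves by atomlessness and the target is halved; otherwise a piece of
submeasure `< ε` that is at least half as large as any such piece is cut off `x`. An endless run
of cuts is impossible: either the remainders, all of submeasure `≥ ε`, decrease to `⊥`, or a
nonzero element of small submeasure lies below all of them and bounds the disjoint cut pieces
from below; both contradict continuity. Hence the target halves infinitely often on every branch.

Sending `{n} × [f ↾ N]` to the tree node at `f ↾ N`, and a clopen set to the supremum of the
nodes of the basic sets it contains, is an injective Boolean homomorphism, because every section
of a clopen subset of `ℕ × 2^ℕ` is decided by a finite initial segment. Finally, if the `Nᵢ` are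
chosen with `μ (F ({n} × [fᵢ ↾ Nᵢ])) ≤ μ (c n) / 2 ^ (i + 2)`, continuity makes `μ` countably
subadditive, so the supremum has submeasure at most `μ (c n) / 2 < μ (c n)`.
-/

open Filter Topology Function PiNat

section Atomless

theorem exists_strictAnti_of_not_isAtom {α : Type*} [PartialOrder α] [OrderBot α]
    (hat : ∀ b : α, ¬ IsAtom b) {b : α} (hb : b ≠ ⊥) :
    ∃ r : ℕ → α, r 0 = b ∧ StrictAnti r ∧ ∀ k, r k ≠ ⊥ := by
  have hstep : ∀ c : {c : α // c ≠ ⊥}, ∃ d : {c : α // c ≠ ⊥}, d.1 < c.1 := by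
    rintro ⟨c, hc⟩
    obtain ⟨d, hdc, hd⟩ : ∃ d < c, d ≠ ⊥ := by simpa [IsAtom, hc] using hat c
    exact ⟨⟨d, hd⟩, hdc⟩
  choose g hg using hstep
  refine ⟨fun k => (g^[k] ⟨b, hb⟩).1, rfl, strictAnti_nat_of_succ_lt fun k => ?_,
    fun k => (g^[k] ⟨b, hb⟩).2⟩
  simpa only [iterate_succ_apply'] using hg _

variable {B : Type*} [BooleanAlgebra B]

theorem exists_disjoint_sup_eq_of_not_isAtom (hat : ∀ b : B, ¬ IsAtom b) {b : B} (hb : b ≠ ⊥) :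
    ∃ p : B × B, p.1 ≠ ⊥ ∧ p.2 ≠ ⊥ ∧ Disjoint p.1 p.2 ∧ p.1 ⊔ p.2 = b := by
  obtain ⟨u, hub, hu⟩ : ∃ u < b, u ≠ ⊥ := by simpa [IsAtom, hb] using hat b
  exact ⟨(u, b \ u), hu, fun h => hub.not_ge (sdiff_eq_bot_iff.1 h), disjoint_sdiff_self_right,
    sup_sdiff_cancel_right hub.le⟩

noncomputable def halves (x : B) : B × B :=
  Classical.epsilon fun p => p.1 ≠ ⊥ ∧ p.2 ≠ ⊥ ∧ Disjoint p.1 p.2 ∧ p.1 ⊔ p.2 = x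

theorem halves_spec (hat : ∀ b : B, ¬ IsAtom b) {x : B} (hx : x ≠ ⊥) :
    (halves x).1 ≠ ⊥ ∧ (halves x).2 ≠ ⊥ ∧ Disjoint (halves x).1 (halves x).2 ∧
      (halves x).1 ⊔ (halves x).2 = x :=
  Classical.epsilon_spec (exists_disjoint_sup_eq_of_not_isAtom hat hx)

theorem exists_pairwise_disjoint_of_not_isAtom (hat : ∀ b : B, ¬ IsAtom b) {b : B}
    (hb : b ≠ ⊥) : ∃ x : ℕ → B, Pairwise (Disjoint on x) ∧ ∀ k, x k ≠ ⊥ ∧ x k ≤ b := by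
  obtain ⟨r, rfl, hr, -⟩ := exists_strictAnti_of_not_isAtom hat hb
  refine ⟨fun k => r k \ r (k + 1), (pairwise_disjoint_on _).2 fun j k hjk => ?_,
    fun k => ⟨?_, ?_⟩⟩
  · exact (disjoint_sdiff_self_left.mono_right (hr.antitone hjk)).mono_right sdiff_le
  · exact fun h => (hr (lt_add_one k)).not_ge (sdiff_eq_bot_iff.1 h)
  · exact sdiff_le.trans (hr.antitone (Nat.zero_le k))

end Atomless

theorem exists_pairwise_disjoint_iSup_eq_top {B : Type*} [CompleteBooleanAlgebra B]
    [Nontrivial B] (hat : ∀ b : B, ¬ IsAtom b) :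
    ∃ c : ℕ → B, Pairwise (Disjoint on c) ∧ (∀ n, c n ≠ ⊥) ∧ ⨆ n, c n = ⊤ := by
  obtain ⟨x, hx, hxne⟩ := exists_pairwise_disjoint_of_not_isAtom hat (top_ne_bot (α := B))
  set c : ℕ → B := fun | 0 => (⨆ k, x (k + 1))ᶜ | n + 1 => x (n + 1)
  have hx0 : x 0 ≤ c 0 := Disjoint.le_compl_right (disjoint_iSup_iff.2 fun k => hx (by omega))
  refine ⟨c, (pairwise_disjoint_on c).2 fun i j hij => ?_, fun n => ?_, ?_⟩
  · obtain ⟨j, rfl⟩ := Nat.exists_eq_add_one_of_ne_zero (by omega : j ≠ 0)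
    cases i with
    | zero => exact disjoint_compl_left.mono_right (le_iSup (fun k => x (k + 1)) j)
    | succ i => exact hx (by omega)
  · cases n with
    | zero => exact ne_bot_of_le_ne_bot (hxne 0).1 hx0
    | succ n => exact (hxne (n + 1)).1
  · rw [← sup_iSup_nat_succ, eq_top_iff]
    exact (compl_sup_eq_top (x := ⨆ k, x (k + 1))).ge

section IterateAlong

variable {α β : Type*} (s : β → α → α) (a : α)

def iterateAlong (f : ℕ → β) : ℕ → α
  | 0 => a
  | N + 1 => s (f N) (iterateAlong f N)

variable {s a}

theorem iterateAlong_congr {f g : ℕ → β} {N : ℕ} (h : ∀ k < N, f k = g k) :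
    iterateAlong s a f N = iterateAlong s a g N := by
  induction N with
  | zero => rfl
  | succ N ih =>
    simp only [iterateAlong, h N (Nat.lt_succ_self N), ih fun k hk => h k (by omega)]

theorem iterateAlong_update_succ (f : ℕ → β) (N : ℕ) (b : β) :
    iterateAlong s a (update f N b) (N + 1) = s b (iterateAlong s a f N) := by
  rw [iterateAlong, update_self, iterateAlong_congr fun k hk => update_of_ne hk.ne _ _]

end IterateAlong

namespace PiNat

theorem exists_cylinder_subset_of_isOpen_of_isCompact {E : ℕ → Type*}
    [∀ n, TopologicalSpace (E n)] [∀ n, DiscreteTopology (E n)] {S : Set (∀ n, E n)}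
    (hSo : IsOpen S) (hSc : IsCompact S) : ∃ L, ∀ x ∈ S, cylinder x L ⊆ S := by
  have hloc : ∀ x ∈ S, ∃ n, cylinder x n ⊆ S := fun x hx => by
    obtain ⟨_, ⟨y, n, rfl⟩, hxy, hsub⟩ :=
      (isTopologicalBasis_cylinders E).exists_subset_of_mem_open hx hSo
    exact ⟨n, mem_cylinder_iff_eq.1 hxy ▸ hsub⟩
  choose! n hn using hloc
  obtain ⟨t, htS, hcover⟩ := hSc.elim_nhds_subcover (fun x => cylinder x (n x))
    fun x _ => (isOpen_cylinder E x (n x)).mem_nhds (self_mem_cylinder x (n x))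
  refine ⟨t.sup n, fun x hx => ?_⟩
  obtain ⟨y, hyt, hxy⟩ := Set.mem_iUnion₂.1 (hcover hx)
  calc cylinder x (t.sup n) ⊆ cylinder x (n y) := cylinder_anti x (Finset.le_sup hyt)
    _ = cylinder y (n y) := mem_cylinder_iff_eq.1 hxy
    _ ⊆ S := hn y (htS y hyt)

variable {E : ℕ → Type*}

theorem cylinder_subset_or_disjoint (x y : ∀ n, E n) {N M : ℕ} (h : N ≤ M) :
    cylinder y M ⊆ cylinder x N ∨ Disjoint (cylinder x N) (cylinder y M) := by
  by_cases hy : y ∈ cylinder x N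
  · exact .inl ((cylinder_anti y h).trans (mem_cylinder_iff_eq.1 hy).le)
  · refine .inr (Set.disjoint_left.2 fun z hzx hzy => hy ?_)
    rw [mem_cylinder_iff_eq, ← mem_cylinder_iff_eq.1 hzx]
    exact (mem_cylinder_iff_eq.1 (cylinder_anti y h hzy)).symm

theorem exists_ne_of_disjoint_cylinder {x y : ∀ n, E n} {N M : ℕ}
    (h : Disjoint (cylinder x N) (cylinder y M)) : ∃ k < N, k < M ∧ x k ≠ y k := by
  classical
  by_contra! hxy
  refine Set.disjoint_left.1 h (show (fun k => if k < N then x k else y k) ∈ cylinder x N from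
    fun k hk => if_pos hk) fun k hk => ?_
  by_cases hkN : k < N
  · simp only [if_pos hkN, hxy k hkN hk]
  · simp only [if_neg hkN]

end PiNat

structure Submeasure (B : Type*) [BooleanAlgebra B] where
  toFun : B → ℝ
  map_bot : toFun ⊥ = 0
  mono : Monotone toFun
  map_sup_le (a b : B) : toFun (a ⊔ b) ≤ toFun a + toFun b

namespace Submeasure

section BooleanAlgebra

variable {B : Type*} [BooleanAlgebra B]

instance : CoeFun (Submeasure B) (fun _ => B → ℝ) := ⟨toFun⟩

variable (m : Submeasure B)

def IsStrictlyPositive : Prop := ∀ a, m a = 0 → a = ⊥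

theorem nonneg (a : B) : 0 ≤ m a := m.map_bot ▸ m.mono bot_le

theorem le_add_sdiff (a b : B) : m a ≤ m b + m (a \ b) :=
  (m.mono le_sup_sdiff).trans (m.map_sup_le _ _)

theorem map_finset_sup_le {ι : Type*} (s : Finset ι) (a : ι → B) :
    m (s.sup a) ≤ ∑ i ∈ s, m (a i) := by
  classical
  induction s using Finset.cons_induction with
  | empty => simp [m.map_bot]
  | cons i s hi ih =>
    rw [Finset.sup_cons, Finset.sum_cons]
    exact (m.map_sup_le _ _).trans (by linarith)

variable {m}

theorem pos_of_ne_bot (hm : m.IsStrictlyPositive) {a : B} (ha : a ≠ ⊥) : 0 < m a :=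
  (m.nonneg a).lt_of_ne fun h => ha (hm a h.symm)

end BooleanAlgebra

variable {B : Type*} [CompleteBooleanAlgebra B]

variable (m : Submeasure B) in
def IsContinuous : Prop :=
  ∀ a : ℕ → B, Antitone a → ⨅ n, a n = ⊥ → Tendsto (fun n => m (a n)) atTop (𝓝 0)

variable {m : Submeasure B}

theorem tendsto_of_pairwise_disjoint (hm : m.IsContinuous) {x : ℕ → B}
    (hx : Pairwise (Disjoint on x)) : Tendsto (fun n => m (x n)) atTop (𝓝 0) := by
  set t : ℕ → B := fun k => ⨆ i ≥ k, x i
  have ht : Antitone t := fun j k hjk => biSup_mono fun i hi => hjk.trans hi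
  have hinf : ⨅ k, t k = ⊥ := by
    refine Disjoint.eq_bot_of_le (b := ⨆ j, x j) (disjoint_iSup_iff.2 fun j => ?_)
      ((iInf_le t 0).trans (iSup₂_le fun i _ => le_iSup x i))
    exact (disjoint_iSup₂_iff.2 fun i (hi : j + 1 ≤ i) => hx (by omega : j ≠ i)).symm.mono_left
      (iInf_le t (j + 1))
  exact tendsto_of_tendsto_of_tendsto_of_le_of_le tendsto_const_nhds (hm t ht hinf)
    (fun k => m.nonneg _) fun k => m.mono (le_iSup₂_of_le k le_rfl le_rfl)

theorem map_iSup_le_of_monotone (hm : m.IsContinuous) {s : ℕ → B} (hs : Monotone s) {c : ℝ}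
    (h : ∀ k, m (s k) ≤ c) : m (⨆ k, s k) ≤ c := by
  set t : ℕ → B := fun k => (⨆ k, s k) \ s k
  have ht : Antitone t := fun j k hjk => sdiff_le_sdiff_left (hs hjk)
  have hinf : ⨅ k, t k = ⊥ :=
    Disjoint.eq_bot_of_le (disjoint_iSup_iff.2 fun k => disjoint_sdiff_self_left.mono_left
      (iInf_le t k)) ((iInf_le t 0).trans sdiff_le)
  refine ge_of_tendsto (by simpa using (hm t ht hinf).const_add c)
    (Eventually.of_forall fun k => ?_)
  exact (m.le_add_sdiff _ (s k)).trans (by linarith [h k])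

theorem iSup_lt_of_map_le (hm : m.IsContinuous) (hp : m.IsStrictlyPositive) {a : ℕ → B}
    {b : B} (hb : b ≠ ⊥) (hab : ∀ i, a i ≤ b) (ha : ∀ i, m (a i) ≤ m b / 2 ^ (i + 2)) :
    ⨆ i, a i < b := by
  have hpartial : ∀ k, m (partialSups a k) ≤ m b / 2 := fun k => by
    rw [partialSups_eq_sup_range]
    calc m ((Finset.range (k + 1)).sup a)
        ≤ ∑ i ∈ Finset.range (k + 1), m b / 4 * (1 / 2) ^ i :=
          (m.map_finset_sup_le _ a).trans (Finset.sum_le_sum fun i _ => (ha i).trans_eq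
            (by rw [one_div_pow, pow_add]; ring))
      _ = m b / 4 * ∑ i ∈ Finset.range (k + 1), (1 / 2 : ℝ) ^ i := by rw [Finset.mul_sum]
      _ ≤ m b / 4 * 2 :=
          mul_le_mul_of_nonneg_left (sum_geometric_two_le _) (by linarith [m.nonneg b])
      _ = m b / 2 := by ring
  have hsup : m (⨆ i, a i) ≤ m b / 2 := by
    rw [← iSup_partialSups_eq]
    exact map_iSup_le_of_monotone hm (partialSups a).monotone hpartial
  refine (iSup_le hab).lt_of_ne fun h => ?_
  rw [h] at hsup
  linarith [pos_of_ne_bot hp hb]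

theorem exists_ne_bot_le_lt (hat : ∀ b : B, ¬ IsAtom b) (hm : m.IsContinuous) {b : B}
    (hb : b ≠ ⊥) {ε : ℝ} (hε : 0 < ε) : ∃ x, x ≠ ⊥ ∧ x ≤ b ∧ m x < ε := by
  obtain ⟨x, hdisj, hx⟩ := exists_pairwise_disjoint_of_not_isAtom hat hb
  obtain ⟨k, hk⟩ :=
    ((tendsto_of_pairwise_disjoint hm hdisj).eventually (gt_mem_nhds hε)).exists
  exact ⟨x k, (hx k).1, (hx k).2, hk⟩

variable (m) in
def IsGreedyPiece (ε : ℝ) (x p : B) : Prop :=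
  p ≠ ⊥ ∧ p ≤ x ∧ m p < ε ∧ ∀ y, y ≠ ⊥ → y ≤ x → m y < ε → m y ≤ 2 * m p

theorem exists_isGreedyPiece (hat : ∀ b : B, ¬ IsAtom b) (hm : m.IsContinuous) {x : B}
    (hx : x ≠ ⊥) {ε : ℝ} (hε : 0 < ε) : ∃ p, m.IsGreedyPiece ε x p := by
  set T := m '' {y | y ≠ ⊥ ∧ y ≤ x ∧ m y < ε}
  obtain ⟨y₀, hy₀⟩ := exists_ne_bot_le_lt hat hm hx hε
  have hT : BddAbove T := ⟨ε, by rintro _ ⟨y, hy, rfl⟩; exact hy.2.2.le⟩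
  have hle : ∀ y, y ≠ ⊥ → y ≤ x → m y < ε → m y ≤ sSup T :=
    fun y hy hyx hyε => le_csSup hT ⟨y, ⟨hy, hyx, hyε⟩, rfl⟩
  rcases le_or_gt (sSup T) 0 with hs | hs
  · exact ⟨y₀, hy₀.1, hy₀.2.1, hy₀.2.2, fun y hy hyx hyε =>
      (hle y hy hyx hyε).trans (hs.trans (by linarith [m.nonneg y₀]))⟩
  · obtain ⟨_, ⟨p, hp, rfl⟩, hpT⟩ :=
      exists_lt_of_lt_csSup (⟨_, y₀, hy₀, rfl⟩ : T.Nonempty) (half_lt_self hs)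
    exact ⟨p, hp.1, hp.2.1, hp.2.2, fun y hy hyx hyε => by linarith [hle y hy hyx hyε]⟩

theorem exists_lt_of_isGreedyPiece (hat : ∀ b : B, ¬ IsAtom b) (hm : m.IsContinuous)
    (hp : m.IsStrictlyPositive) {ε : ℝ} {x p : ℕ → B} (hε : 0 < ε)
    (hxp : ∀ N, x (N + 1) = x N \ p N) (hgreedy : ∀ N, m.IsGreedyPiece ε (x N) (p N)) :
    ∃ N, m (x N) < ε := by
  by_contra! hbig
  have hx : Antitone x := antitone_nat_of_succ_le fun N => (hxp N).trans_le sdiff_le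
  have hdisj : Pairwise (Disjoint on p) := (pairwise_disjoint_on p).2 fun j k hjk =>
    disjoint_sdiff_self_right.mono_right ((hgreedy k).2.1.trans ((hx hjk).trans (hxp j).le))
  by_cases hinf : ⨅ N, x N = ⊥
  · linarith [ge_of_tendsto' (hm x hx hinf) hbig]
  · obtain ⟨y, hy, hyx, hyε⟩ := exists_ne_bot_le_lt hat hm hinf hε
    have hy0 : m y ≤ 0 :=
      ge_of_tendsto' (by simpa using (tendsto_of_pairwise_disjoint hm hdisj).const_mul 2)
        fun N => (hgreedy N).2.2.2 y hy (hyx.trans (iInf_le x N)) hyε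
    linarith [pos_of_ne_bot hp hy]

variable (m) in
noncomputable def greedyPiece (ε : ℝ) (x : B) : B := Classical.epsilon (m.IsGreedyPiece ε x)

variable (m) in
noncomputable def splitStep (b : Bool) (ν : B × ℝ) : B × ℝ :=
  if m ν.1 < ν.2 then (cond b (halves ν.1).2 (halves ν.1).1, ν.2 / 2)
  else (cond b (ν.1 \ m.greedyPiece ν.2 ν.1) (m.greedyPiece ν.2 ν.1), ν.2)

def IsNode (ν : B × ℝ) : Prop := ν.1 ≠ ⊥ ∧ 0 < ν.2

theorem isGreedyPiece_greedyPiece (hat : ∀ b : B, ¬ IsAtom b) (hm : m.IsContinuous)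
    {ν : B × ℝ} (hν : IsNode ν) : m.IsGreedyPiece ν.2 ν.1 (m.greedyPiece ν.2 ν.1) :=
  Classical.epsilon_spec (exists_isGreedyPiece hat hm hν.1 hν.2)

theorem splitStep_of_lt {ν : B × ℝ} (h : m ν.1 < ν.2) (b : Bool) :
    m.splitStep b ν = (cond b (halves ν.1).2 (halves ν.1).1, ν.2 / 2) :=
  if_pos h

theorem splitStep_of_le {ν : B × ℝ} (h : ν.2 ≤ m ν.1) (b : Bool) :
    m.splitStep b ν = (cond b (ν.1 \ m.greedyPiece ν.2 ν.1) (m.greedyPiece ν.2 ν.1), ν.2) :=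
  if_neg h.not_gt

theorem splitStep_snd_le {ν : B × ℝ} (hν : IsNode ν) (b : Bool) :
    (m.splitStep b ν).2 ≤ ν.2 := by
  rcases lt_or_ge (m ν.1) ν.2 with h | h
  · rw [splitStep_of_lt h]; linarith [hν.2]
  · rw [splitStep_of_le h]

theorem isNode_splitStep (hat : ∀ b : B, ¬ IsAtom b) (hm : m.IsContinuous) {ν : B × ℝ}
    (hν : IsNode ν) (b : Bool) : IsNode (m.splitStep b ν) := by
  rcases lt_or_ge (m ν.1) ν.2 with h | h
  · rw [splitStep_of_lt h]
    obtain ⟨h₁, h₂, -⟩ := halves_spec hat hν.1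
    exact ⟨by cases b <;> assumption, half_pos hν.2⟩
  · rw [splitStep_of_le h]
    obtain ⟨hp, -, hpε, -⟩ := isGreedyPiece_greedyPiece hat hm hν
    refine ⟨?_, hν.2⟩
    cases b
    · exact hp
    · exact fun h0 => (hpε.trans_le h).not_ge (m.mono (sdiff_eq_bot_iff.1 h0))

theorem disjoint_splitStep (hat : ∀ b : B, ¬ IsAtom b) {ν : B × ℝ} (hν : IsNode ν) :
    Disjoint (m.splitStep false ν).1 (m.splitStep true ν).1 := by
  rcases lt_or_ge (m ν.1) ν.2 with h | h
  · simpa only [splitStep_of_lt h, cond_false, cond_true] using (halves_spec hat hν.1).2.2.1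
  · simpa only [splitStep_of_le h, cond_false, cond_true] using disjoint_sdiff_self_right

theorem splitStep_sup (hat : ∀ b : B, ¬ IsAtom b) (hm : m.IsContinuous) {ν : B × ℝ}
    (hν : IsNode ν) : (m.splitStep false ν).1 ⊔ (m.splitStep true ν).1 = ν.1 := by
  rcases lt_or_ge (m ν.1) ν.2 with h | h
  · simpa only [splitStep_of_lt h, cond_false, cond_true] using (halves_spec hat hν.1).2.2.2
  · simpa only [splitStep_of_le h, cond_false, cond_true] using
      sup_sdiff_cancel_right (isGreedyPiece_greedyPiece hat hm hν).2.1

theorem isNode_iterateAlong (hat : ∀ b : B, ¬ IsAtom b) (hm : m.IsContinuous) {ν : B × ℝ}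
    (hν : IsNode ν) (f : ℕ → Bool) (N : ℕ) : IsNode (iterateAlong m.splitStep ν f N) := by
  induction N with
  | zero => exact hν
  | succ N ih => exact isNode_splitStep hat hm ih (f N)

theorem frequently_lt_snd_iterateAlong (hat : ∀ b : B, ¬ IsAtom b) (hm : m.IsContinuous)
    (hp : m.IsStrictlyPositive) {ν : B × ℝ} (hν : IsNode ν) (f : ℕ → Bool) :
    ∃ᶠ N in atTop,
      m (iterateAlong m.splitStep ν f N).1 < (iterateAlong m.splitStep ν f N).2 := by
  set w := iterateAlong m.splitStep ν f
  rw [frequently_atTop]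
  intro N₀
  by_contra! hbig
  -- past `N₀` every step cuts and follows the remainder, since the cut piece is below target
  have hcut : ∀ N ≥ N₀, w (N + 1) = ((w N).1 \ m.greedyPiece (w N).2 (w N).1, (w N).2) := by
    intro N hN
    have hstep : w (N + 1) = m.splitStep (f N) (w N) := rfl
    rw [hstep, splitStep_of_le (hbig N hN)]
    cases hfN : f N
    · have hpε := (isGreedyPiece_greedyPiece hat hm (isNode_iterateAlong hat hm hν f N)).2.2.1
      have hnext := hbig (N + 1) (by omega)
      rw [hstep, splitStep_of_le (hbig N hN), hfN] at hnext
      exact absurd hpε hnext.not_gt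
    · rfl
  have hsnd : ∀ k, (w (N₀ + k)).2 = (w N₀).2 := by
    intro k
    induction k with
    | zero => rfl
    | succ k ih => rw [← add_assoc, hcut _ (by omega), ih]
  obtain ⟨k, hk⟩ := exists_lt_of_isGreedyPiece hat hm hp (isNode_iterateAlong hat hm hν f N₀).2
    (x := fun k => (w (N₀ + k)).1) (p := fun k => m.greedyPiece (w N₀).2 (w (N₀ + k)).1)
    (fun k => by simp only [← add_assoc, hcut _ (by omega : N₀ + k ≥ N₀), hsnd])
    (fun k => hsnd k ▸ isGreedyPiece_greedyPiece hat hm (isNode_iterateAlong hat hm hν f _))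
  exact (hbig (N₀ + k) (by omega)).not_gt (hsnd k ▸ hk)

theorem exists_map_iterateAlong_lt (hat : ∀ b : B, ¬ IsAtom b) (hm : m.IsContinuous)
    (hp : m.IsStrictlyPositive) {ν : B × ℝ} (hν : IsNode ν) (f : ℕ → Bool) {δ : ℝ}
    (hδ : 0 < δ) : ∃ N, m (iterateAlong m.splitStep ν f N).1 < δ := by
  set w := iterateAlong m.splitStep ν f
  have hfreq := frequently_lt_snd_iterateAlong hat hm hp hν f
  have hanti : Antitone fun N => (w N).2 := antitone_nat_of_succ_le fun N =>
    splitStep_snd_le (isNode_iterateAlong hat hm hν f N) (f N)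
  have hhalve : ∀ k, ∃ N, (w N).2 ≤ ν.2 * (1 / 2) ^ k := by
    intro k
    induction k with
    | zero => exact ⟨0, by simp [w, iterateAlong]⟩
    | succ k ih =>
      obtain ⟨N, hN⟩ := ih
      obtain ⟨M, hNM, hM⟩ := frequently_atTop.1 hfreq N
      have hstep : (w (M + 1)).2 = (w M).2 / 2 := by
        simp only [w, iterateAlong, splitStep_of_lt hM]
      refine ⟨M + 1, ?_⟩
      rw [hstep, pow_succ]
      linarith [hanti hNM]
  obtain ⟨k, hk⟩ := exists_pow_lt_of_lt_one (div_pos hδ hν.2) one_half_lt_one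
  obtain ⟨N, hN⟩ := hhalve k
  obtain ⟨M, hNM, hM⟩ := frequently_atTop.1 hfreq N
  refine ⟨M, ?_⟩
  calc m (w M).1 < (w M).2 := hM
    _ ≤ (w N).2 := hanti hNM
    _ ≤ ν.2 * (1 / 2) ^ k := hN
    _ < δ := by rwa [lt_div_iff₀ hν.2, mul_comm] at hk

end Submeasure

/-- `elt n f N` is the element assigned to the basic clopen set `{n} × [f ↾ N]` of
`ℕ × 2^ℕ`. -/
structure CantorScheme (B : Type*) [CompleteBooleanAlgebra B] where
  root : ℕ → B
  elt : ℕ → (ℕ → Bool) → ℕ → B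
  elt_zero (n : ℕ) (f : ℕ → Bool) : elt n f 0 = root n
  elt_congr (n : ℕ) {f g : ℕ → Bool} {N : ℕ} : (∀ k < N, f k = g k) → elt n f N = elt n g N
  elt_ne_bot (n : ℕ) (f : ℕ → Bool) (N : ℕ) : elt n f N ≠ ⊥
  sup_elt_update (n : ℕ) (f : ℕ → Bool) (N : ℕ) :
    elt n (update f N false) (N + 1) ⊔ elt n (update f N true) (N + 1) = elt n f N
  disjoint_elt_update (n : ℕ) (f : ℕ → Bool) (N : ℕ) :
    Disjoint (elt n (update f N false) (N + 1)) (elt n (update f N true) (N + 1))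
  pairwise_disjoint_root : Pairwise (Disjoint on root)
  iSup_root : ⨆ n, root n = ⊤

namespace CantorScheme

variable {B : Type*} [CompleteBooleanAlgebra B] (S : CantorScheme B)

theorem root_ne_bot (n : ℕ) : S.root n ≠ ⊥ :=
  S.elt_zero n (fun _ => false) ▸ S.elt_ne_bot n _ 0

theorem elt_update_succ_le (n : ℕ) (f : ℕ → Bool) (N : ℕ) (b : Bool) :
    S.elt n (update f N b) (N + 1) ≤ S.elt n f N := by
  rw [← S.sup_elt_update n f N]
  cases b
  · exact le_sup_left
  · exact le_sup_right

theorem elt_antitone (n : ℕ) (f : ℕ → Bool) : Antitone (S.elt n f) :=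
  antitone_nat_of_succ_le fun N => by
    simpa only [update_eq_self] using S.elt_update_succ_le n f N (f N)

theorem elt_le_root (n : ℕ) (f : ℕ → Bool) (N : ℕ) : S.elt n f N ≤ S.root n :=
  S.elt_zero n f ▸ S.elt_antitone n f (Nat.zero_le N)

theorem iSup_elt_eq (n : ℕ) (f : ℕ → Bool) {N M : ℕ} (h : N ≤ M) :
    ⨆ g ∈ cylinder f N, S.elt n g M = S.elt n f N := by
  induction M, h using Nat.le_induction with
  | base =>
    exact le_antisymm (iSup₂_le fun g hg => (S.elt_congr n hg).le)
      (le_iSup₂_of_le f (self_mem_cylinder f N) le_rfl)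
  | succ M hNM ih =>
    refine le_antisymm ((iSup₂_mono fun g _ => S.elt_antitone n g M.le_succ).trans ih.le) ?_
    refine ih ▸ iSup₂_le fun g hg => S.sup_elt_update n g M ▸ sup_le ?_ ?_ <;>
      exact le_iSup₂_of_le _ (fun k hk => (update_of_ne (by omega) _ _).trans (hg k hk)) le_rfl

theorem elt_le_elt_of_cylinder_subset (n : ℕ) {f g : ℕ → Bool} {N M : ℕ}
    (h : cylinder f N ⊆ cylinder g M) : S.elt n f N ≤ S.elt n g M := by
  rw [← S.iSup_elt_eq n f (Nat.le_add_right N M)]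
  exact iSup₂_le fun f' hf' =>
    (S.elt_antitone n f' (Nat.le_add_left M N)).trans (S.elt_congr n (h hf')).le

theorem disjoint_elt_of_exists_ne (n : ℕ) {f g : ℕ → Bool} {K : ℕ} (h : ∃ k < K, f k ≠ g k) :
    Disjoint (S.elt n f K) (S.elt n g K) := by
  induction K with
  | zero => simp at h
  | succ K ih =>
    by_cases hK : ∃ k < K, f k ≠ g k
    · exact (ih hK).mono (S.elt_antitone n f K.le_succ) (S.elt_antitone n g K.le_succ)
    push Not at hK
    have hfgK : f K ≠ g K := by
      obtain ⟨k, hk, hne⟩ := h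
      rcases Nat.lt_succ_iff_lt_or_eq.1 hk with hk | rfl
      · exact absurd (hK k hk) hne
      · exact hne
    have hf : S.elt n f (K + 1) = S.elt n (update f K (f K)) (K + 1) := by rw [update_eq_self]
    have hg : S.elt n g (K + 1) = S.elt n (update f K (g K)) (K + 1) :=
      S.elt_congr n fun k hk => by
        rcases Nat.lt_succ_iff_lt_or_eq.1 hk with hk | rfl
        · rw [update_of_ne hk.ne, hK k hk]
        · rw [update_self]
    rw [hf, hg]
    cases hfK : f K <;> cases hgK : g K <;> simp only [hfK, hgK] at hfgK ⊢
    · exact absurd rfl hfgK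
    · exact S.disjoint_elt_update n f K
    · exact (S.disjoint_elt_update n f K).symm
    · exact absurd rfl hfgK

theorem disjoint_elt_of_disjoint_cylinder (n : ℕ) {f g : ℕ → Bool} {N M : ℕ}
    (h : Disjoint (cylinder f N) (cylinder g M)) : Disjoint (S.elt n f N) (S.elt n g M) := by
  obtain ⟨k, hkN, hkM, hne⟩ := exists_ne_of_disjoint_cylinder h
  exact (S.disjoint_elt_of_exists_ne n ⟨k, k.lt_succ_self, hne⟩).mono
    (S.elt_antitone n f hkN) (S.elt_antitone n g hkM)

theorem disjoint_elt_of_ne {n n' : ℕ} (h : n ≠ n') (f g : ℕ → Bool) (N M : ℕ) :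
    Disjoint (S.elt n f N) (S.elt n' g M) :=
  (S.pairwise_disjoint_root h).mono (S.elt_le_root n f N) (S.elt_le_root n' g M)

def hom (A : Set (ℕ × (ℕ → Bool))) : B :=
  sSup {b | ∃ n f N, {n} ×ˢ cylinder f N ⊆ A ∧ S.elt n f N = b}

variable {S}

theorem elt_le_hom {A : Set (ℕ × (ℕ → Bool))} {n : ℕ} {f : ℕ → Bool} {N : ℕ}
    (h : {n} ×ˢ cylinder f N ⊆ A) : S.elt n f N ≤ S.hom A :=
  le_sSup ⟨n, f, N, h, rfl⟩

theorem hom_le {A : Set (ℕ × (ℕ → Bool))} {b : B}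
    (h : ∀ n f N, {n} ×ˢ cylinder f N ⊆ A → S.elt n f N ≤ b) : S.hom A ≤ b :=
  sSup_le <| by rintro _ ⟨n, f, N, hA, rfl⟩; exact h n f N hA

theorem hom_mono {A A' : Set (ℕ × (ℕ → Bool))} (h : A ⊆ A') : S.hom A ≤ S.hom A' :=
  hom_le fun _ _ _ hA => elt_le_hom (hA.trans h)

theorem hom_prod_cylinder (n : ℕ) (f : ℕ → Bool) (N : ℕ) :
    S.hom ({n} ×ˢ cylinder f N) = S.elt n f N := by
  refine le_antisymm (hom_le fun n' f' N' h => ?_) (elt_le_hom subset_rfl)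
  obtain ⟨rfl, -⟩ := h (Set.mk_mem_prod rfl (self_mem_cylinder f' N'))
  exact S.elt_le_elt_of_cylinder_subset n' fun g hg => (h (Set.mk_mem_prod rfl hg)).2

theorem hom_prod_univ (n : ℕ) : S.hom ({n} ×ˢ Set.univ) = S.root n := by
  rw [← cylinder_zero (fun _ => false), hom_prod_cylinder, S.elt_zero]

theorem hom_empty : S.hom ∅ = ⊥ :=
  eq_bot_iff.2 <| hom_le fun _ f N h =>
    absurd (h (Set.mk_mem_prod rfl (self_mem_cylinder f N))) (Set.notMem_empty _)

theorem hom_univ : S.hom Set.univ = ⊤ :=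
  eq_top_iff.2 <| S.iSup_root ▸ iSup_le fun n =>
    hom_prod_univ (S := S) n ▸ hom_mono (Set.subset_univ _)

theorem exists_prod_cylinder_subset {A : Set (ℕ × (ℕ → Bool))} (hA : IsClopen A) (n : ℕ) :
    ∃ L, ∀ g, (n, g) ∈ A → {n} ×ˢ cylinder g L ⊆ A := by
  have hS : IsClopen (Prod.mk n ⁻¹' A) := hA.preimage (Continuous.prodMk_right n)
  obtain ⟨L, hL⟩ :=
    exists_cylinder_subset_of_isOpen_of_isCompact hS.isOpen hS.isClosed.isCompact
  exact ⟨L, fun g hg => by rintro ⟨_, h⟩ ⟨rfl, hh⟩; exact hL g hg hh⟩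

theorem hom_union {A A' : Set (ℕ × (ℕ → Bool))} (hA : IsClopen A) (hA' : IsClopen A') :
    S.hom (A ∪ A') = S.hom A ⊔ S.hom A' := by
  refine le_antisymm (hom_le fun n f N h => ?_)
    (sup_le (hom_mono Set.subset_union_left) (hom_mono Set.subset_union_right))
  obtain ⟨L, hL⟩ := exists_prod_cylinder_subset hA n
  obtain ⟨L', hL'⟩ := exists_prod_cylinder_subset hA' n
  rw [← S.iSup_elt_eq n f (le_max_left N (max L L'))]
  refine iSup₂_le fun g hg => ?_
  have hLmax : L ≤ max N (max L L') := (le_max_left L L').trans (le_max_right _ _)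
  have hL'max : L' ≤ max N (max L L') := (le_max_right L L').trans (le_max_right _ _)
  rcases h (Set.mk_mem_prod rfl hg) with hgA | hgA'
  · exact le_sup_of_le_left (elt_le_hom
      ((Set.prod_mono subset_rfl (cylinder_anti g hLmax)).trans (hL g hgA)))
  · exact le_sup_of_le_right (elt_le_hom
      ((Set.prod_mono subset_rfl (cylinder_anti g hL'max)).trans (hL' g hgA')))

theorem elt_inf_elt_le_hom_inter {A A' : Set (ℕ × (ℕ → Bool))} {n n' : ℕ} {f f' : ℕ → Bool}
    {N N' : ℕ} (h : {n} ×ˢ cylinder f N ⊆ A) (h' : {n'} ×ˢ cylinder f' N' ⊆ A') :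
    S.elt n f N ⊓ S.elt n' f' N' ≤ S.hom (A ∩ A') := by
  rcases eq_or_ne n n' with rfl | hn
  · wlog hNN : N ≤ N' generalizing f f' N N' A A'
    · rw [inf_comm, Set.inter_comm]
      exact this h' h (le_of_not_ge hNN)
    rcases cylinder_subset_or_disjoint f f' hNN with hsub | hdisj
    · exact inf_le_right.trans
        (elt_le_hom (Set.subset_inter ((Set.prod_mono subset_rfl hsub).trans h) h'))
    · exact (S.disjoint_elt_of_disjoint_cylinder n hdisj).eq_bot ▸ bot_le
  · exact (S.disjoint_elt_of_ne hn f f' N N').eq_bot ▸ bot_le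

theorem hom_inter (A A' : Set (ℕ × (ℕ → Bool))) : S.hom (A ∩ A') = S.hom A ⊓ S.hom A' := by
  refine le_antisymm
    (le_inf (hom_mono Set.inter_subset_left) (hom_mono Set.inter_subset_right)) ?_
  rw [hom, hom, sSup_inf_sSup]
  refine iSup₂_le ?_
  rintro ⟨_, _⟩ ⟨⟨n, f, N, h, rfl⟩, ⟨n', f', N', h', rfl⟩⟩
  exact elt_inf_elt_le_hom_inter h h'

theorem hom_compl {A : Set (ℕ × (ℕ → Bool))} (hA : IsClopen A) : S.hom Aᶜ = (S.hom A)ᶜ := by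
  refine (IsCompl.of_eq ?_ ?_).compl_eq.symm
  · rw [← hom_inter, Set.inter_compl_self, hom_empty]
  · rw [← hom_union hA hA.compl, Set.union_compl_self, hom_univ]

theorem hom_ne_bot {A : Set (ℕ × (ℕ → Bool))} (hA : IsClopen A) (hne : A.Nonempty) :
    S.hom A ≠ ⊥ := by
  obtain ⟨⟨n, g⟩, hg⟩ := hne
  obtain ⟨L, hL⟩ := exists_prod_cylinder_subset hA n
  exact ne_bot_of_le_ne_bot (S.elt_ne_bot n g L) (elt_le_hom (hL g hg))

theorem injOn_hom : Set.InjOn S.hom {A | IsClopen A} := by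
  have hsub : ∀ {A A' : Set (ℕ × (ℕ → Bool))}, IsClopen A → IsClopen A' →
      S.hom A = S.hom A' → A ⊆ A' := fun {A A'} hA hA' heq => by
    by_contra hAA'
    refine hom_ne_bot (S := S) (hA.inter hA'.compl) (Set.sdiff_nonempty.2 hAA') ?_
    rw [hom_inter, hom_compl hA', heq, inf_compl_self]
  exact fun A hA A' hA' heq => (hsub hA hA' heq).antisymm (hsub hA' hA heq.symm)

end CantorScheme

theorem Submeasure.exists_cantorScheme {B : Type*} [CompleteBooleanAlgebra B] [Nontrivial B]
    {m : Submeasure B} (hat : ∀ b : B, ¬ IsAtom b) (hm : m.IsContinuous)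
    (hp : m.IsStrictlyPositive) :
    ∃ S : CantorScheme B, ∀ n f, ∀ δ > 0, ∃ N, m (S.elt n f N) < δ := by
  obtain ⟨c, hdisj, hne, hsup⟩ := exists_pairwise_disjoint_iSup_eq_top hat
  have hnode : ∀ n, IsNode (c n, (1 : ℝ)) := fun n => ⟨hne n, one_pos⟩
  refine ⟨{ root := c
            elt := fun n f N => (iterateAlong m.splitStep (c n, 1) f N).1
            elt_zero := fun n f => rfl
            elt_congr := fun n f g N h => by rw [iterateAlong_congr h]
            elt_ne_bot := fun n f N => (isNode_iterateAlong hat hm (hnode n) f N).1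
            sup_elt_update := fun n f N => by
              simpa only [iterateAlong_update_succ] using
                splitStep_sup hat hm (isNode_iterateAlong hat hm (hnode n) f N)
            disjoint_elt_update := fun n f N => by
              simpa only [iterateAlong_update_succ] using
                disjoint_splitStep hat (isNode_iterateAlong hat hm (hnode n) f N)
            pairwise_disjoint_root := hdisj
            iSup_root := hsup },
    fun n f δ hδ => exists_map_iterateAlong_lt hat hm hp (hnode n) f hδ⟩

theorem statement0 (B : Type*) [CompleteBooleanAlgebra B] [Nontrivial B]
    (hatomless : ∀ b : B, ¬ IsAtom b)
    (μ : B → ℝ)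
    (hzero : μ ⊥ = 0)
    (hmono : ∀ a b : B, a ≤ b → μ a ≤ μ b)
    (hsubadd : ∀ a b : B, μ (a ⊔ b) ≤ μ a + μ b)
    (hpos : ∀ a : B, μ a = 0 → a = ⊥)
    (hcont : ∀ a : ℕ → B, Antitone a → (⨅ n, a n) = ⊥ →
      Tendsto (fun n => μ (a n)) atTop (𝓝 0)) :
    ∃ F : Set (ℕ × (ℕ → Bool)) → B,
      Set.InjOn F {A | IsClopen A} ∧
      F ∅ = ⊥ ∧
      F Set.univ = ⊤ ∧
      (∀ A A' : Set (ℕ × (ℕ → Bool)), IsClopen A → IsClopen A' → F (A ∪ A') = F A ⊔ F A') ∧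
      (∀ A A' : Set (ℕ × (ℕ → Bool)), IsClopen A → IsClopen A' → F (A ∩ A') = F A ⊓ F A') ∧
      (∀ A : Set (ℕ × (ℕ → Bool)), IsClopen A → F Aᶜ = (F A)ᶜ) ∧
      (∀ n : ℕ, ∀ f : ℕ → (ℕ → Bool), ∃ N : ℕ → ℕ,
        (⨆ i : ℕ, F ({n} ×ˢ {g : ℕ → Bool | ∀ k < N i, g k = f i k})) <
          F ({n} ×ˢ (Set.univ : Set (ℕ → Bool)))) := by
  let m : Submeasure B := ⟨μ, hzero, fun a b h => hmono a b h, hsubadd⟩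
  obtain ⟨S, hS⟩ := m.exists_cantorScheme hatomless hcont hpos
  refine ⟨S.hom, CantorScheme.injOn_hom, CantorScheme.hom_empty, CantorScheme.hom_univ,
    fun A A' hA hA' => CantorScheme.hom_union hA hA', fun A A' _ _ => CantorScheme.hom_inter A A',
    fun A hA => CantorScheme.hom_compl hA, fun n f => ?_⟩
  have hroot : 0 < m (S.root n) := Submeasure.pos_of_ne_bot (m := m) hpos (S.root_ne_bot n)
  choose N hN using fun i => hS n (f i) (m (S.root n) / 2 ^ (i + 2)) (by positivity)
  refine ⟨N, ?_⟩
  change ⨆ i, S.hom ({n} ×ˢ cylinder (f i) (N i)) < S.hom ({n} ×ˢ Set.univ)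
  simp only [CantorScheme.hom_prod_cylinder, CantorScheme.hom_prod_univ]
  exact Submeasure.iSup_lt_of_map_le (m := m) hcont hpos (S.root_ne_bot n)
    (fun i => S.elt_le_root n (f i) (N i)) fun i => (hN i).le
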